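/- For every positive integer k, ∑_{i=1}^∞ (1/(i+k)) · C(2i,i)/4^i = (4^k / (k·C(2k,k))) − 1/k. -/

import Mathlib

open scoped BigOperators
open Real

noncomputable def cb (k : ℕ) : ℝ := (Nat.choose (2*k) k : ℝ) / 4^k

noncomputable def H (k : ℕ) : ℝ := ∑ j ∈ Finset.range k, (1:ℝ)/(j+1)

noncomputable def oh (k : ℕ) : ℝ := ∑ j ∈ Finset.range k, (1:ℝ)/(2*j+1)

/-!
Write `c i = C(2i,i)/4^i` and `S k = ∑_{i ≥ 1} c i / (i + k)`. Since `(2i + 2) c (i+1) = (2i + 1) c i`,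
the numbers `e i = 2 i c i / (i + k)` satisfy
`e i - e (i+1) = (2k + 1) c i / (i + k + 1) - 2k c i / (i + k)`, and `e i → 0` because
`c i ^ 2 ≤ 1 / (2i + 1)`. Summing gives `(2k + 1) S (k+1) = 2k S k + 1 / (k + 1)`, from which
`k S k = 1 / c k - 1` follows by induction from `k = 0`, where both sides vanish.
-/

open Filter Topology Finset

lemma cb_pos (k : ℕ) : 0 < cb k := by
  unfold cb
  have := Nat.choose_pos (Nat.le_mul_of_pos_left k two_pos)
  positivity

lemma cb_zero : cb 0 = 1 := by
  simp [cb]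

lemma cb_succ (k : ℕ) : cb (k + 1) = cb k * (2 * k + 1) / (2 * k + 2) := by
  have h : ((k : ℝ) + 1) * (Nat.choose (2 * (k + 1)) (k + 1) : ℝ)
      = 2 * (2 * k + 1) * (Nat.choose (2 * k) k : ℝ) := by
    exact_mod_cast Nat.succ_mul_centralBinom_succ k
  unfold cb
  rw [pow_succ]
  field_simp
  linear_combination 2 * h

lemma cb_sq_le (k : ℕ) : cb k ^ 2 ≤ 1 / (2 * k + 1) := by
  induction k with
  | zero => simp [cb_zero]
  | succ k ih =>
    rw [cb_succ, div_pow, div_le_div_iff₀ (by positivity) (by positivity)]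
    rw [le_div_iff₀ (by positivity)] at ih
    push_cast
    nlinarith [sq_nonneg (cb k), (by positivity : (0 : ℝ) ≤ k)]

lemma tendsto_cb_atTop : Tendsto cb atTop (𝓝 0) := by
  have hsq : Tendsto (fun k => cb k ^ 2) atTop (𝓝 0) := by
    refine squeeze_zero (fun k => sq_nonneg _) (fun k => ?_)
      tendsto_one_div_add_atTop_nhds_zero_nat
    refine (cb_sq_le k).trans (one_div_le_one_div_of_le (by positivity) ?_)
    linarith [(by positivity : (0 : ℝ) ≤ k)]
  simpa [sqrt_sq (cb_pos _).le] using hsq.sqrt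

lemma tendsto_boundary_term (k : ℕ) :
    Tendsto (fun n : ℕ => 2 * ((n : ℝ) + 1) * cb (n + 1) / (n + 1 + k)) atTop (𝓝 0) := by
  have hcb : Tendsto (fun n => 2 * cb (n + 1)) atTop (𝓝 0) := by
    simpa using (tendsto_cb_atTop.comp (tendsto_add_atTop_nat 1)).const_mul 2
  refine squeeze_zero (fun n => by have := cb_pos (n + 1); positivity) (fun n => ?_) hcb
  have := cb_pos (n + 1)
  rw [div_le_iff₀ (by positivity)]
  nlinarith [(by positivity : (0 : ℝ) ≤ k)]

lemma sum_range_recurrence (k n : ℕ) :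
    (2 * k + 1) * ∑ i ∈ range n, 1 / ((i : ℝ) + 1 + (k + 1 : ℕ)) * cb (i + 1)
      = 2 * k * ∑ i ∈ range n, 1 / ((i : ℝ) + 1 + k) * cb (i + 1)
        + 1 / (k + 1) - 2 * ((n : ℝ) + 1) * cb (n + 1) / (n + 1 + k) := by
  induction n with
  | zero =>
    simp only [range_zero, sum_empty, Nat.cast_zero, zero_add, mul_zero, cb_succ, cb_zero]
    field_simp
    ring
  | succ n ih =>
    rw [sum_range_succ, sum_range_succ, mul_add, mul_add, ih, cb_succ (n + 1)]
    push_cast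
    field_simp
    ring

lemma tendsto_mul_sum_range (k : ℕ) :
    Tendsto (fun n => k * ∑ i ∈ range n, 1 / ((i : ℝ) + 1 + k) * cb (i + 1)) atTop
      (𝓝 (1 / cb k - 1)) := by
  induction k with
  | zero => simp [cb_zero]
  | succ k ih =>
    have hlim := ((ih.const_mul 2).add_const (1 / (k + 1 : ℝ))).sub (tendsto_boundary_term k)
      |>.const_mul ((k + 1 : ℝ) / (2 * k + 1))
    convert hlim using 2 with n
    · rw [← mul_assoc, ← sum_range_recurrence]
      push_cast
      field_simp
    · have := cb_pos k
      rw [cb_succ]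
      field_simp
      ring

theorem stmt_2 (k : ℕ) (hk : 0 < k) :
    ∑' i : ℕ, (1/((i:ℝ)+1+k)) * cb (i+1)
      = (4:ℝ)^k / (k * (Nat.choose (2*k) k)) - 1/k := by
  have hk' : (k : ℝ) ≠ 0 := Nat.cast_ne_zero.mpr hk.ne'
  have hsum : HasSum (fun i : ℕ => 1 / ((i : ℝ) + 1 + k) * cb (i + 1)) ((1 / cb k - 1) / k) := by
    rw [hasSum_iff_tendsto_nat_of_nonneg (fun i => by have := cb_pos (i + 1); positivity)]
    simpa [hk'] using (tendsto_mul_sum_range k).div_const (k : ℝ)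
  rw [hsum.tsum_eq]
  have := cb_pos k
  unfold cb at this ⊢
  field_simp
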